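/- For every digraph G=(V,A) with root r, nonnegative arc costs c, and nonnegative node penalties π, there exists an out-arborescence T rooted at r such that c(T) + π(V∖V(T)) is at most the minimum, over all collections C of r-rooted walks, of the total cost of the walks in C plus the total penalty of nodes not visited by any walk in C. -/

import Mathlib

open Finset

/-- Cost of a walk given by its vertex sequence. -/
def walkCost {V : Type*} (c : V → V → ℝ) (P : List V) : ℝ :=
  ((P.zip P.tail).map fun q => c q.1 q.2).sum

/-- A walk rooted at `r` in the digraph with arc set `A`. -/
def IsWalk {V : Type*} (A : Finset (V × V)) (r : V) (P : List V) : Prop :=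
  P.head? = some r ∧ P.Chain' (fun u v => (u, v) ∈ A)

/-! A cheapest out-arborescence exists because there are only finitely many candidates
`(S, par)`. It beats every collection `C` of `r`-rooted walks: tracing the walks of `C` one
after another and giving each newly visited node the node it was entered from as parent
builds an out-arborescence spanning every visited node, whose arcs are among those traversed
by `C`; as costs are nonnegative, revisits only waste cost. Its penalty is at most that of
`C` because it spans all visited nodes, and penalties are nonnegative. -/

section

variable {V : Type*}

theorem walkCost_cons_cons (c : V → V → ℝ) (u v : V) (Q : List V) :
    walkCost c (u :: v :: Q) = c u v + walkCost c (v :: Q) := by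
  simp [walkCost]

structure IsOutArborescence (A : Finset (V × V)) (r : V) (S : Finset V) (par : V → V) :
    Prop where
  root_mem : r ∈ S
  parent_spec : ∀ v ∈ S, v ≠ r → (par v, v) ∈ A ∧ par v ∈ S
  reaches_root : ∀ v ∈ S, ∃ n : ℕ, par^[n] v = r

theorem IsOutArborescence.singleton (A : Finset (V × V)) (r : V) :
    IsOutArborescence A r {r} id where
  root_mem := mem_singleton_self r
  parent_spec _ hv hvr := absurd (mem_singleton.mp hv) hvr
  reaches_root _ hv := ⟨0, mem_singleton.mp hv⟩

theorem exists_isOutArborescence_forall_le [Fintype V] (A : Finset (V × V)) (r : V)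
    (f : Finset V → (V → V) → ℝ) :
    ∃ S par, IsOutArborescence A r S par ∧
      ∀ S' par', IsOutArborescence A r S' par' → f S par ≤ f S' par' := by
  have : Nonempty {T : Finset V × (V → V) // IsOutArborescence A r T.1 T.2} :=
    ⟨⟨({r}, id), .singleton A r⟩⟩
  obtain ⟨⟨⟨S, par⟩, hT⟩, hmin⟩ := Finite.exists_min fun T :
    {T : Finset V × (V → V) // IsOutArborescence A r T.1 T.2} => f T.1.1 T.1.2
  exact ⟨S, par, hT, fun S' par' hT' => hmin ⟨(S', par'), hT'⟩⟩

variable [DecidableEq V]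

/-- Before reaching `r`, the orbit of `w` stays in `S`, so it never consults the value at `v`. -/
theorem exists_iterate_update_eq {f : V → V} {S : Set V} {r v : V}
    (hS : ∀ w ∈ S, w ≠ r → f w ∈ S) (hv : v ∉ S) (u : V) {n : ℕ} {w : V} (hw : w ∈ S)
    (h : f^[n] w = r) : ∃ m, (Function.update f v u)^[m] w = r := by
  induction n generalizing w with
  | zero => exact ⟨0, h⟩
  | succ n ih =>
    by_cases hwr : w = r
    · exact ⟨0, hwr⟩
    obtain ⟨m, hm⟩ := ih (hS w hw hwr) h
    refine ⟨m + 1, ?_⟩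
    rwa [Function.iterate_succ_apply, Function.update_of_ne (ne_of_mem_of_not_mem hw hv)]

def arborescenceCost (c : V → V → ℝ) (r : V) (S : Finset V) (par : V → V) : ℝ :=
  ∑ v ∈ S.erase r, c (par v) v

variable {A : Finset (V × V)} {r : V}

theorem IsOutArborescence.insert {S : Finset V} {par : V → V}
    (hT : IsOutArborescence A r S par) {u v : V} (hu : u ∈ S) (hv : v ∉ S)
    (huv : (u, v) ∈ A) :
    IsOutArborescence A r (insert v S) (Function.update par v u) where
  root_mem := mem_insert_of_mem hT.root_mem
  parent_spec w hw hwr := by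
    rcases mem_insert.mp hw with rfl | hw
    · rw [Function.update_self]
      exact ⟨huv, mem_insert_of_mem hu⟩
    · rw [Function.update_of_ne (ne_of_mem_of_not_mem hw hv)]
      exact (hT.parent_spec w hw hwr).imp_right (mem_insert_of_mem ·)
  reaches_root w hw := by
    have hS : ∀ x ∈ (S : Set V), x ≠ r → par x ∈ (S : Set V) :=
      fun x hx hxr => (hT.parent_spec x hx hxr).2
    rcases mem_insert.mp hw with rfl | hw
    · obtain ⟨n, hn⟩ := hT.reaches_root u hu
      obtain ⟨m, hm⟩ := exists_iterate_update_eq hS hv u hu hn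
      exact ⟨m + 1, by rwa [Function.iterate_succ_apply, Function.update_self]⟩
    · obtain ⟨n, hn⟩ := hT.reaches_root w hw
      exact exists_iterate_update_eq hS hv u hw hn

theorem arborescenceCost_insert (c : V → V → ℝ) {u v : V} {S : Finset V} (par : V → V)
    (hvr : v ≠ r) (hv : v ∉ S) :
    arborescenceCost c r (insert v S) (Function.update par v u) =
      arborescenceCost c r S par + c u v := by
  have hv' : v ∉ S.erase r := fun h => hv (mem_of_mem_erase h)
  have hpar : ∀ w ∈ S.erase r, c (Function.update par v u w) w = c (par w) w := by
    intro w hw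
    rw [Function.update_of_ne (ne_of_mem_of_not_mem hw hv')]
  rw [arborescenceCost, arborescenceCost, erase_insert_of_ne hvr, sum_insert hv',
    sum_congr rfl hpar, Function.update_self, add_comm]

theorem IsOutArborescence.exists_extend_walk {c : V → V → ℝ} (hc : ∀ u v, 0 ≤ c u v) :
    ∀ (Q : List V) {u : V} {S : Finset V} {par : V → V},
      IsOutArborescence A r S par → u ∈ S → (u :: Q).IsChain (fun a b => (a, b) ∈ A) →
      ∃ S' par', IsOutArborescence A r S' par' ∧ S ⊆ S' ∧ (∀ x ∈ Q, x ∈ S') ∧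
        arborescenceCost c r S' par' ≤ arborescenceCost c r S par + walkCost c (u :: Q)
  | [], _, S, par, hT, _, _ => ⟨S, par, hT, subset_rfl, by simp, by simp [walkCost]⟩
  | v :: Q, u, S, par, hT, hu, hchain => by
    obtain ⟨huv, hchain⟩ := List.isChain_cons_cons.mp hchain
    rw [walkCost_cons_cons]
    by_cases hv : v ∈ S
    · obtain ⟨S', par', hT', hSS', hQ, hcost⟩ := exists_extend_walk hc Q hT hv hchain
      refine ⟨S', par', hT', hSS', List.forall_mem_cons.2 ⟨hSS' hv, hQ⟩, ?_⟩
      linarith [hc u v]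
    · have hvr : v ≠ r := fun h => hv (h ▸ hT.root_mem)
      obtain ⟨S', par', hT', hSS', hQ, hcost⟩ :=
        exists_extend_walk hc Q (hT.insert hu hv huv) (mem_insert_self v S) hchain
      refine ⟨S', par', hT', (subset_insert v S).trans hSS',
        List.forall_mem_cons.2 ⟨hSS' (mem_insert_self v S), hQ⟩, ?_⟩
      rw [arborescenceCost_insert c par hvr hv] at hcost
      linarith

theorem exists_isOutArborescence_covering_walks {c : V → V → ℝ} (hc : ∀ u v, 0 ≤ c u v)
    (C : List (List V)) (hC : ∀ P ∈ C, IsWalk A r P) :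
    ∃ S par, IsOutArborescence A r S par ∧ (∀ P ∈ C, ∀ x ∈ P, x ∈ S) ∧
      arborescenceCost c r S par ≤ (C.map (walkCost c)).sum := by
  induction C with
  | nil => exact ⟨{r}, id, .singleton A r, by simp, by simp [arborescenceCost]⟩
  | cons P C ih =>
    obtain ⟨S, par, hT, hcover, hcost⟩ := ih fun P hP => hC P (List.mem_cons_of_mem _ hP)
    obtain ⟨hhead, hchain⟩ := hC P List.mem_cons_self
    obtain ⟨Q, rfl⟩ := List.head?_eq_some_iff.mp hhead
    obtain ⟨S', par', hT', hSS', hQ, hcost'⟩ := hT.exists_extend_walk hc Q hT.root_mem hchain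
    refine ⟨S', par', hT', ?_, by rw [List.map_cons, List.sum_cons]; linarith⟩
    simp only [List.forall_mem_cons]
    exact ⟨⟨hSS' hT.root_mem, hQ⟩, fun P hP x hx => hSS' (hcover P hP x hx)⟩

end

/-- (Main theorem.)  For every digraph with nonnegative arc costs and
node penalties there is an out-arborescence `T` rooted at `r` (given by its vertex set
`S` and parent function `par`) whose prize-collecting cost
`c(T) + π(V ∖ V(T))` is at most the prize-collecting cost of every collection of
`r`-rooted walks, i.e. at most the optimum value `O*`. -/
theorem pcw_arborescence_exists
    {V : Type*} [Fintype V] [DecidableEq V]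
    (A : Finset (V × V)) (r : V) (c : V → V → ℝ) (π : V → ℝ)
    (hc : ∀ u v, 0 ≤ c u v) (hπ : ∀ v, 0 ≤ π v) :
    ∃ (S : Finset V) (par : V → V),
      r ∈ S ∧
      (∀ v ∈ S, v ≠ r → (par v, v) ∈ A ∧ par v ∈ S) ∧
      (∀ v ∈ S, ∃ n : ℕ, par^[n] v = r) ∧
      ∀ C : List (List V), (∀ P ∈ C, IsWalk A r P) →
        (∑ v ∈ S.erase r, c (par v) v) + ∑ v ∈ Sᶜ, π v ≤
          (C.map (walkCost c)).sum +
            ∑ v ∈ Finset.univ.filter (fun v => ∀ P ∈ C, v ∉ P), π v := by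
  obtain ⟨S, par, hT, hmin⟩ := exists_isOutArborescence_forall_le A r
    fun S par => arborescenceCost c r S par + ∑ v ∈ Sᶜ, π v
  refine ⟨S, par, hT.root_mem, hT.parent_spec, hT.reaches_root, fun C hC => ?_⟩
  obtain ⟨S', par', hT', hcover, hcost⟩ := exists_isOutArborescence_covering_walks hc C hC
  have hunvisited : S'ᶜ ⊆ univ.filter fun v => ∀ P ∈ C, v ∉ P :=
    fun v hv => mem_filter.2 ⟨mem_univ v, fun P hP hvP => mem_compl.1 hv (hcover P hP v hvP)⟩
  have hpenalty := sum_le_sum_of_subset_of_nonneg hunvisited fun v _ _ => hπ v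
  calc _ ≤ arborescenceCost c r S' par' + ∑ v ∈ S'ᶜ, π v := hmin S' par' hT'
    _ ≤ _ := add_le_add hcost hpenalty
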